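/- arXiv:1910.07888 — 2 statements merged into one kernel-verified Lean document; each statement's English description precedes it below -/
import Mathlib

section
/- Let x : ℝ → ℝ^N solve the D_N gradient ODE x_i' = Σ_{j≠i}(1/(x_i−x_j) + 1/(x_i+x_j)) on the open chamber {x_1 > ... > x_{N-1} > |x_N|}. Then ‖x(t)‖² = 2N(N−1)t + ‖x(0)‖². -/
open Finset

/-- Elementary symmetric polynomial of degree `k` in the variables `x i`, `i ∈ s`. -/
noncomputable def esymm {N : ℕ} (s : Finset (Fin N)) (k : ℕ) (x : Fin N → ℝ) : ℝ :=
  ∑ A ∈ s.powersetCard k, ∏ i ∈ A, x i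

/-! Along a solution,
`d/dt ∑ i, x i ^ 2 = 2 ∑ i, x i ∑_{j ≠ i} (1 / (x i - x j) + 1 / (x i + x j))`.
Grouping the terms of each pair `{i, j}`, `x i / (x i - x j) + x j / (x j - x i) = 1` and
`x i / (x i + x j) + x j / (x j + x i) = 1`, so the double sum is `N (N - 1)` at every point
of the chamber and `‖x‖²` grows linearly with speed `2 N (N - 1)`. -/

lemma mul_one_div_sub_add_one_div_add_symm {a b : ℝ} (hsub : a - b ≠ 0) (hadd : a + b ≠ 0) :
    a * (1 / (a - b) + 1 / (a + b)) + b * (1 / (b - a) + 1 / (b + a)) = 2 := by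
  have hsub' : b - a ≠ 0 := by rwa [← neg_sub, neg_ne_zero]
  have hadd' : b + a ≠ 0 := by rwa [add_comm]
  field_simp
  ring

lemma sum_sum_erase_eq_of_add_swap {ι : Type*} [Fintype ι] [DecidableEq ι]
    {g : ι → ι → ℝ} {c : ℝ} (hg : ∀ i j, i ≠ j → g i j + g j i = c) :
    2 * ∑ i, ∑ j ∈ univ.erase i, g i j = c * (Fintype.card ι * (Fintype.card ι - 1)) := by
  have hswap : ∑ i, ∑ j ∈ univ.erase i, g i j = ∑ i, ∑ j ∈ univ.erase i, g j i := by
    rw [sum_comm' (t' := univ) (s' := fun j => univ.erase j)]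
    simp [ne_comm]
  calc 2 * ∑ i, ∑ j ∈ univ.erase i, g i j
      = ∑ i, ∑ j ∈ univ.erase i, (g i j + g j i) := by
        simp only [sum_add_distrib]; rw [← hswap, two_mul]
    _ = ∑ i : ι, ∑ _j ∈ univ.erase i, c :=
        sum_congr rfl fun i _ => sum_congr rfl fun j hj => hg i j (ne_of_mem_erase hj).symm
    _ = c * (Fintype.card ι * (Fintype.card ι - 1)) := by
        rcases (Fintype.card ι).eq_zero_or_pos with h | h
        · simp [h]
        · simp [card_erase_of_mem, Nat.cast_sub h]; ring

lemma sum_mul_sum_erase_one_div_sub_add_one_div_add {N : ℕ} {x : Fin N → ℝ}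
    (hx : ∀ i j : Fin N, i < j → |x j| < x i) :
    ∑ i, x i * ∑ j ∈ univ.erase i, (1 / (x i - x j) + 1 / (x i + x j)) = N * (N - 1) := by
  have hpair : ∀ i j : Fin N, i ≠ j →
      x i * (1 / (x i - x j) + 1 / (x i + x j)) +
        x j * (1 / (x j - x i) + 1 / (x j + x i)) = 2 := by
    intro i j hij
    wlog hlt : i < j generalizing i j
    · rw [add_comm]; exact this j i hij.symm (lt_of_le_of_ne (not_lt.1 hlt) hij.symm)
    obtain ⟨hlow, hhigh⟩ := abs_lt.1 (hx i j hlt)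
    exact mul_one_div_sub_add_one_div_add_symm (by linarith) (by linarith)
  have := sum_sum_erase_eq_of_add_swap hpair
  simp only [← mul_sum, Fintype.card_fin] at this
  linarith

lemma Convex.eq_mul_sub_add_of_hasDerivAt {I : Set ℝ} (hI : Convex ℝ I) {f : ℝ → ℝ}
    {c : ℝ} (hf : ∀ t ∈ I, HasDerivAt f c t) {s t : ℝ} (hs : s ∈ I) (ht : t ∈ I) :
    f t = c * (t - s) + f s := by
  have hg : ∀ u ∈ I, HasDerivWithinAt (fun u => f u - c * u) 0 I u := fun u hu => by
    have := ((hf u hu).fun_sub ((hasDerivAt_id u).const_mul c)).hasDerivWithinAt (s := I)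
    rwa [mul_one, sub_self] at this
  have := hI.norm_image_sub_le_of_norm_hasDerivWithin_le hg (fun _ _ => norm_zero.le) hs ht
  rw [zero_mul, norm_le_zero_iff, sub_eq_zero] at this
  linarith

theorem stmt7 (N : ℕ) (I : Set ℝ) (hI : Convex ℝ I) (h0 : (0 : ℝ) ∈ I)
    (x : ℝ → Fin N → ℝ)
    (hcham : ∀ t ∈ I, ∀ i j : Fin N, i < j → |x t j| < x t i)
    (hode : ∀ t ∈ I, ∀ i : Fin N, HasDerivAt (fun s => x s i)
      (∑ j ∈ Finset.univ.erase i, (1 / (x t i - x t j) + 1 / (x t i + x t j))) t) :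
    ∀ t ∈ I, ∑ i, (x t i) ^ 2 = 2 * (N : ℝ) * ((N : ℝ) - 1) * t + ∑ i, (x 0 i) ^ 2 := by
  have hderiv : ∀ t ∈ I,
      HasDerivAt (fun s => ∑ i, (x s i) ^ 2) (2 * (N : ℝ) * ((N : ℝ) - 1)) t := by
    intro t ht
    have hsum := HasDerivAt.fun_sum fun i (_ : i ∈ univ) => (hode t ht i).fun_pow 2
    simp only [Nat.cast_ofNat, Nat.add_one_sub_one, pow_one, mul_assoc, ← mul_sum,
      sum_mul_sum_erase_one_div_sub_add_one_div_add (hcham t ht)] at hsum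
    rwa [← mul_assoc] at hsum
  intro t ht
  simpa using hI.eq_mul_sub_add_of_hasDerivAt hderiv h0 ht
end

section
/- Let ν ≥ 0 and x : I → ℝ^N solve the B_N ODE x_i' = Σ_{j≠i}(1/(x_i−x_j) + 1/(x_i+x_j)) + ν/x_i in the open chamber {x_1 > ... > x_N > 0}. Then for 2 ≤ k ≤ N, d/dt ẽ_k(x(t)) = 2(N−k+1)(N−k+ν) · ẽ_{k-1}(x(t)), where ẽ_k(x) := e_k(x_1²,...,x_N²). -/
/-!
Put `y i = x i ^ 2`. The equation gives `y i' = 4 ∑_{j ≠ i} y i / (y i - y j) + 2ν`, and the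
product rule gives `ẽ_{k+1}' = ∑ i, e_k(y without y i) * y i'`. The `ν`-part contributes
`2ν (N - k) ẽ_k`, since every `k`-subset misses `N - k` indices. The singular part is handled by
symmetrising over pairs `i ≠ j`: splitting `y j` off `e_k(y without y i)` and `y i` off
`e_k(y without y j)` shows that the two terms of the pair add up to `e_k(y without y i, y j)`,
so the double sum equals `½ (N - 1 - k)(N - k) ẽ_k`.
-/

open Finset

theorem Finset.sum_powersetCard_succ_sum_erase {α β : Type*} [DecidableEq α] [AddCommMonoid β]
    (s : Finset α) (k : ℕ) (f : Finset α → α → β) :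
    ∑ A ∈ s.powersetCard (k + 1), ∑ i ∈ A, f (A.erase i) i
      = ∑ i ∈ s, ∑ B ∈ (s.erase i).powersetCard k, f B i := by
  rw [sum_sigma', sum_sigma']
  refine sum_nbij' (fun p => ⟨p.2, p.1.erase p.2⟩) (fun p => ⟨insert p.1 p.2, p.1⟩)
    ?_ ?_ ?_ ?_ fun _ _ => rfl
  all_goals simp only [mem_sigma, mem_powersetCard, subset_erase]
  · grind
  · grind
  · rintro ⟨A, i⟩ ⟨-, hi⟩
    simp [insert_erase hi]
  · rintro ⟨i, B⟩ ⟨-, ⟨-, hi⟩, -⟩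
    simp [erase_insert hi]

theorem esymm_insert_succ {N : ℕ} {s : Finset (Fin N)} {i : Fin N} (hi : i ∉ s) (k : ℕ)
    (y : Fin N → ℝ) :
    esymm (insert i s) (k + 1) y = esymm s (k + 1) y + y i * esymm s k y := by
  rw [esymm, powersetCard_succ_insert hi, sum_union, sum_image, esymm, esymm, mul_sum]
  · refine congrArg _ (sum_congr rfl fun A hA => ?_)
    rw [prod_insert fun h => hi ((mem_powersetCard.mp hA).1 h)]
  · intro A hA B hB h
    simp only [mem_coe, mem_powersetCard] at hA hB
    rw [← erase_insert (fun h => hi (hA.1 h)), h, erase_insert (fun h => hi (hB.1 h))]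
  · simp only [disjoint_left, mem_powersetCard, mem_image]
    rintro A ⟨hA, -⟩ ⟨B, -, rfl⟩
    exact hi (hA (mem_insert_self i B))

theorem esymm_succ_of_mem {N : ℕ} {s : Finset (Fin N)} {i : Fin N} (hi : i ∈ s) (k : ℕ)
    (y : Fin N → ℝ) :
    esymm s (k + 1) y = esymm (s.erase i) (k + 1) y + y i * esymm (s.erase i) k y := by
  conv_lhs => rw [← insert_erase hi]
  exact esymm_insert_succ (notMem_erase i s) k y

theorem sum_esymm_erase {N : ℕ} (s : Finset (Fin N)) (k : ℕ) (y : Fin N → ℝ) :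
    ∑ i ∈ s, esymm (s.erase i) k y = ((#s : ℝ) - k) * esymm s k y := by
  simp only [esymm]
  rw [sum_comm' (t' := s.powersetCard k) (s' := fun A => s \ A), mul_sum]
  · refine sum_congr rfl fun A hA => ?_
    obtain ⟨hAs, hcard⟩ := mem_powersetCard.mp hA
    rw [sum_const, nsmul_eq_mul, card_sdiff_of_subset hAs, Nat.cast_sub (card_le_card hAs), hcard]
  · intro i A
    simp only [mem_powersetCard, subset_erase, mem_sdiff]
    tauto

theorem esymm_erase_mul_div_add_esymm_erase_mul_div {N : ℕ} {s : Finset (Fin N)} {i j : Fin N}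
    (hi : i ∈ s) (hj : j ∈ s) (hij : i ≠ j) {y : Fin N → ℝ} (hy : y i ≠ y j) (k : ℕ) :
    esymm (s.erase i) k y * (y i / (y i - y j)) + esymm (s.erase j) k y * (y j / (y j - y i))
      = esymm ((s.erase i).erase j) k y := by
  have hsub : y i - y j ≠ 0 := sub_ne_zero.mpr hy
  have hsub' : y j - y i ≠ 0 := sub_ne_zero.mpr hy.symm
  cases k with
  | zero =>
    simp only [esymm, powersetCard_zero, sum_singleton, prod_empty, one_mul]
    field_simp
    ring
  | succ k =>
    rw [esymm_succ_of_mem (mem_erase.mpr ⟨hij.symm, hj⟩),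
      esymm_succ_of_mem (mem_erase.mpr ⟨hij, hi⟩), erase_right_comm]
    field_simp
    ring

theorem sum_esymm_erase_mul_sum_div {N : ℕ} {s : Finset (Fin N)} {y : Fin N → ℝ}
    (hy : Set.InjOn y s) (k : ℕ) :
    ∑ i ∈ s, esymm (s.erase i) k y * ∑ j ∈ s.erase i, y i / (y i - y j)
      = ((#s : ℝ) - 1 - k) * ((#s : ℝ) - k) / 2 * esymm s k y := by
  set f : Fin N → Fin N → ℝ := fun i j => esymm (s.erase i) k y * (y i / (y i - y j))
  have hswap : ∑ i ∈ s, ∑ j ∈ s.erase i, f i j = ∑ i ∈ s, ∑ j ∈ s.erase i, f j i :=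
    sum_comm' fun i j => by simp only [mem_erase]; tauto
  have hpair : ∀ i ∈ s, ∑ j ∈ s.erase i, (f i j + f j i)
      = ((#s : ℝ) - 1 - k) * esymm (s.erase i) k y := by
    intro i hi
    rw [← Nat.cast_pred (card_pos.mpr ⟨i, hi⟩), ← card_erase_of_mem hi, ← sum_esymm_erase]
    refine sum_congr rfl fun j hj => ?_
    obtain ⟨hji, hj⟩ := mem_erase.mp hj
    exact esymm_erase_mul_div_add_esymm_erase_mul_div hi hj hji.symm
      (hy.ne (mem_coe.mpr hi) (mem_coe.mpr hj) hji.symm) k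
  have hdouble : 2 * ∑ i ∈ s, ∑ j ∈ s.erase i, f i j
      = ((#s : ℝ) - 1 - k) * ((#s : ℝ) - k) * esymm s k y := by
    rw [two_mul]
    nth_rewrite 2 [hswap]
    simp only [← sum_add_distrib]
    rw [sum_congr rfl hpair, ← mul_sum, sum_esymm_erase, mul_assoc]
  simp only [mul_sum]
  linarith

theorem hasDerivAt_esymm_succ {N : ℕ} (s : Finset (Fin N)) (k : ℕ) {y : ℝ → Fin N → ℝ}
    {y' : Fin N → ℝ} {t : ℝ} (hy : ∀ i ∈ s, HasDerivAt (fun u => y u i) (y' i) t) :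
    HasDerivAt (fun u => esymm s (k + 1) (y u))
      (∑ i ∈ s, esymm (s.erase i) k (y t) * y' i) t := by
  have hprod : ∀ A ∈ s.powersetCard (k + 1), HasDerivAt (fun u => ∏ i ∈ A, y u i)
      (∑ i ∈ A, (∏ j ∈ A.erase i, y t j) * y' i) t := fun A hA => by
    simpa using HasDerivAt.fun_finsetProd fun i hi => hy i ((mem_powersetCard.mp hA).1 hi)
  refine (HasDerivAt.fun_sum hprod).congr_deriv ?_
  rw [sum_powersetCard_succ_sum_erase s k fun B i => (∏ j ∈ B, y t j) * y' i]
  simp only [esymm, sum_mul]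

theorem two_mul_mul_one_div_sub_add_one_div_add {a b : ℝ} (hsub : a - b ≠ 0)
    (hadd : a + b ≠ 0) :
    2 * a * (1 / (a - b) + 1 / (a + b)) = 4 * (a ^ 2 / (a ^ 2 - b ^ 2)) := by
  have hsq : a ^ 2 - b ^ 2 ≠ 0 := by
    rw [sq_sub_sq]
    exact mul_ne_zero hadd hsub
  field_simp
  ring

theorem hasDerivAt_sq_of_typeB_ode {ι : Type*} [Fintype ι] [DecidableEq ι] {ν t : ℝ}
    {x : ℝ → ι → ℝ} (hpos : ∀ i, 0 < x t i) (hinj : Function.Injective (x t)) {i : ι}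
    (hx : HasDerivAt (fun u => x u i)
      (∑ j ∈ univ.erase i, (1 / (x t i - x t j) + 1 / (x t i + x t j)) + ν / x t i) t) :
    HasDerivAt (fun u => x u i ^ 2)
      (4 * ∑ j ∈ univ.erase i, x t i ^ 2 / (x t i ^ 2 - x t j ^ 2) + 2 * ν) t := by
  refine (hx.pow 2).congr_deriv ?_
  rw [Nat.cast_ofNat, pow_one, mul_add, mul_sum, mul_sum]
  congr 1
  · refine sum_congr rfl fun j hj => two_mul_mul_one_div_sub_add_one_div_add ?_ ?_
    · exact sub_ne_zero.mpr (hinj.ne (mem_erase.mp hj).1.symm)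
    · exact (add_pos (hpos i) (hpos j)).ne'
  · field_simp [(hpos i).ne']

theorem stmt10_general (N : ℕ) (ν : ℝ) (I : Set ℝ) (x : ℝ → Fin N → ℝ)
    (hcham : ∀ t ∈ I, (∀ i j : Fin N, i < j → x t j < x t i) ∧ ∀ i : Fin N, 0 < x t i)
    (hode : ∀ t ∈ I, ∀ i : Fin N, HasDerivAt (fun s => x s i)
      (∑ j ∈ Finset.univ.erase i,
          (1 / (x t i - x t j) + 1 / (x t i + x t j)) + ν / x t i) t) :
    ∀ t ∈ I, ∀ k : ℕ, 2 ≤ k → k ≤ N →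
      HasDerivAt (fun s => esymm Finset.univ k (fun i => (x s i) ^ 2))
        (2 * ((N : ℝ) - k + 1) * ((N : ℝ) - k + ν)
          * esymm Finset.univ (k - 1) (fun i => (x t i) ^ 2)) t := by
  intro t ht k hk _
  obtain ⟨k, rfl⟩ : ∃ m, k = m + 1 := ⟨k - 1, by omega⟩
  obtain ⟨hanti, hpos⟩ := hcham t ht
  have hinj : Function.Injective (x t) := StrictAnti.injective fun i j => hanti i j
  have hinj_sq : Set.InjOn (fun i => x t i ^ 2) (univ : Finset (Fin N)) := fun i _ j _ h =>
    hinj ((pow_left_inj₀ (hpos i).le (hpos j).le two_ne_zero).mp h)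
  refine (hasDerivAt_esymm_succ univ k fun i _ =>
    hasDerivAt_sq_of_typeB_ode hpos hinj (hode t ht i)).congr_deriv ?_
  simp only [mul_add, sum_add_distrib, mul_left_comm _ (4 : ℝ), ← mul_sum]
  rw [sum_esymm_erase_mul_sum_div hinj_sq, ← sum_mul, sum_esymm_erase, card_univ,
    Fintype.card_fin, Nat.add_sub_cancel]
  push_cast
  ring

theorem stmt10 (N : ℕ) (ν : ℝ) (hν : 0 ≤ ν) (I : Set ℝ) (x : ℝ → Fin N → ℝ)
    (hcham : ∀ t ∈ I, (∀ i j : Fin N, i < j → x t j < x t i) ∧ ∀ i : Fin N, 0 < x t i)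
    (hode : ∀ t ∈ I, ∀ i : Fin N, HasDerivAt (fun s => x s i)
      (∑ j ∈ Finset.univ.erase i,
          (1 / (x t i - x t j) + 1 / (x t i + x t j)) + ν / x t i) t) :
    ∀ t ∈ I, ∀ k : ℕ, 2 ≤ k → k ≤ N →
      HasDerivAt (fun s => esymm Finset.univ k (fun i => (x s i) ^ 2))
        (2 * ((N : ℝ) - k + 1) * ((N : ℝ) - k + ν)
          * esymm Finset.univ (k - 1) (fun i => (x t i) ^ 2)) t :=
  stmt10_general N ν I x hcham hode
end
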